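/- arXiv:1702.04458 — 2 statements merged into one kernel-verified Lean document; each statement's English description precedes it below -/
import Mathlib

section
/- Projection onto a norm-ball constraint through a surjective affine map: let D ∈ ℂ^{U×(UC)} with DDᴴ = C·I_U, let w ∈ ℂ^{UC}, s ∈ ℂ^U, ε ≥ 0. The unique minimizer of (1/2)‖w - z‖² over z ∈ ℂ^{UC} subject to ‖s - Dz‖ ≤ ε is z* = w + max{0, 1 - ε/‖s - Dw‖}·(1/C)·Dᴴ(s - Dw), interpreted as z* = w when ‖s - Dw‖ ≤ ε. -/
/-!
Write `r = s - A w` and `t = max 0 (1 - ε / ‖r‖)`. Since `A A† = c • 1`, the candidate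
`z* = w + (t / c) • A† r` satisfies `s - A z* = (1 - t) • r`, whose norm is `min ‖r‖ ε`, so `z*`
is feasible. For feasible `z`, Cauchy–Schwarz gives
`re ⟪w - z*, z* - z⟫ = (t / c) ((1 - t) ‖r‖² - re ⟪r, s - A z⟫) ≥ (t / c) ‖r‖ (min ‖r‖ ε - ε)`,
and the right-hand side vanishes by complementary slackness: `t = 0` unless `‖r‖ > ε`.
This variational inequality yields `‖w - z*‖² + ‖z* - z‖² ≤ ‖w - z‖²`, hence minimality and
uniqueness.
-/

open scoped Matrix

noncomputable def vecE {ι : Type*} [Fintype ι] (v : ι → ℂ) : EuclideanSpace ℂ ι :=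
  (WithLp.equiv 2 (ι → ℂ)).symm v

noncomputable def vecP {ι : Type*} [Fintype ι] (v : EuclideanSpace ℂ ι) : ι → ℂ :=
  WithLp.equiv 2 (ι → ℂ) v

open scoped InnerProductSpace
open RCLike

theorem one_sub_max_zero_one_sub_div_mul {a ε : ℝ} (ha : 0 ≤ a) (hε : 0 ≤ ε) :
    (1 - max 0 (1 - ε / a)) * a = min a ε := by
  rcases ha.eq_or_lt with rfl | ha
  · simp [hε]
  rcases le_total a ε with h | h
  · rw [max_eq_left (by rw [sub_nonpos, one_le_div ha]; exact h), min_eq_left h]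
    ring
  · rw [max_eq_right (by rw [sub_nonneg, div_le_one ha]; exact h), min_eq_right h]
    field_simp
    ring

theorem max_zero_one_sub_div_mul_min_sub {a ε : ℝ} (ha : 0 ≤ a) :
    max 0 (1 - ε / a) * (a * (min a ε - ε)) = 0 := by
  rcases ha.eq_or_lt with rfl | ha
  · simp
  rcases le_total a ε with h | h
  · rw [max_eq_left (by rw [sub_nonpos, one_le_div ha]; exact h), zero_mul]
  · rw [min_eq_right h, sub_self, mul_zero, mul_zero]

theorem norm_sub_sq_add_norm_sub_sq_le_of_re_inner_nonneg {𝕜 E : Type*} [RCLike 𝕜]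
    [NormedAddCommGroup E] [InnerProductSpace 𝕜 E] {w p z : E}
    (h : 0 ≤ re ⟪w - p, p - z⟫_𝕜) : ‖w - p‖ ^ 2 + ‖p - z‖ ^ 2 ≤ ‖w - z‖ ^ 2 := by
  have := norm_add_sq (𝕜 := 𝕜) (w - p) (p - z)
  rw [sub_add_sub_cancel] at this
  linarith

namespace ContinuousLinearMap

variable {𝕜 E F : Type*} [RCLike 𝕜]
  [NormedAddCommGroup E] [InnerProductSpace 𝕜 E] [CompleteSpace E]
  [NormedAddCommGroup F] [InnerProductSpace 𝕜 F] [CompleteSpace F]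
  (A : E →L[𝕜] F) (c : ℝ) (s : F) (ε : ℝ) (w : E)

/-- The projection of `w` onto `{z | ‖s - A z‖ ≤ ε}`, provided `A A† = c • 1`. -/
noncomputable def projPreimageClosedBall : E :=
  w + ((max 0 (1 - ε / ‖s - A w‖) / c : ℝ) : 𝕜) • adjoint A (s - A w)

variable {A c}

theorem sub_apply_projPreimageClosedBall (hc : c ≠ 0) (hA : A ∘L adjoint A = (c : 𝕜) • 1) :
    s - A (A.projPreimageClosedBall c s ε w) =
      ((1 - max 0 (1 - ε / ‖s - A w‖) : ℝ) : 𝕜) • (s - A w) := by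
  have hAA : ∀ y, A (adjoint A y) = (c : 𝕜) • y := fun y => by
    simpa using congr($hA y)
  rw [projPreimageClosedBall, map_add, map_smul, hAA, smul_smul, ← ofReal_mul,
    div_mul_cancel₀ _ hc, ofReal_sub, ofReal_one, sub_smul, one_smul]
  abel

theorem norm_sub_apply_projPreimageClosedBall_le (hc : c ≠ 0) (hA : A ∘L adjoint A = (c : 𝕜) • 1)
    (hε : 0 ≤ ε) : ‖s - A (A.projPreimageClosedBall c s ε w)‖ ≤ ε := by
  have ht : max 0 (1 - ε / ‖s - A w‖) ≤ 1 :=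
    max_le zero_le_one (sub_le_self _ (div_nonneg hε (norm_nonneg _)))
  rw [sub_apply_projPreimageClosedBall s ε w hc hA, norm_smul, norm_ofReal,
    abs_of_nonneg (by linarith), one_sub_max_zero_one_sub_div_mul (norm_nonneg _) hε]
  exact min_le_right _ _

theorem re_inner_sub_projPreimageClosedBall_nonneg (hc : 0 < c) (hA : A ∘L adjoint A = (c : 𝕜) • 1)
    (hε : 0 ≤ ε) {z : E} (hz : ‖s - A z‖ ≤ ε) :
    0 ≤ re ⟪w - A.projPreimageClosedBall c s ε w, A.projPreimageClosedBall c s ε w - z⟫_𝕜 := by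
  set r := s - A w
  set t := max 0 (1 - ε / ‖r‖)
  set p := A.projPreimageClosedBall c s ε w
  have hp : s - A p = ((1 - t : ℝ) : 𝕜) • r := sub_apply_projPreimageClosedBall s ε w hc.ne' hA
  have hwp : w - p = -((t / c : ℝ) : 𝕜) • adjoint A r := by
    simp only [p, projPreimageClosedBall, neg_smul]
    abel
  have hinner : re ⟪w - p, p - z⟫_𝕜 = t / c * ((1 - t) * ‖r‖ ^ 2 - re ⟪r, s - A z⟫_𝕜) := by
    have hApz : A p - A z = (s - A z) - ((1 - t : ℝ) : 𝕜) • r := by rw [← hp]; abel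
    rw [hwp, inner_smul_left, adjoint_inner_left, map_sub, hApz, inner_sub_right,
      inner_smul_right, inner_self_eq_norm_sq_to_K]
    simp only [map_neg, conj_ofReal, neg_mul, re_ofReal_mul, map_sub]
    norm_cast
    ring
  have hslack : t * (‖r‖ * (min ‖r‖ ε - ε)) = 0 := max_zero_one_sub_div_mul_min_sub (norm_nonneg r)
  have hmin : (1 - t) * ‖r‖ = min ‖r‖ ε := one_sub_max_zero_one_sub_div_mul (norm_nonneg r) hε
  have hcs : re ⟪r, s - A z⟫_𝕜 ≤ ‖r‖ * ε :=
    (re_inner_le_norm _ _).trans (mul_le_mul_of_nonneg_left hz (norm_nonneg r))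
  calc (0 : ℝ) = t / c * (‖r‖ * (min ‖r‖ ε - ε)) := by rw [div_mul_eq_mul_div, hslack, zero_div]
    _ ≤ t / c * ((1 - t) * ‖r‖ ^ 2 - re ⟪r, s - A z⟫_𝕜) := by
      gcongr
      rw [← hmin]
      linarith
    _ = re ⟪w - p, p - z⟫_𝕜 := hinner.symm

end ContinuousLinearMap

namespace Matrix

variable {𝕜 m n : Type*} [RCLike 𝕜] [Fintype m] [DecidableEq m] [Fintype n] [DecidableEq n]

theorem adjoint_toContinuousLinearMap_toEuclideanLin (D : Matrix m n 𝕜) :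
    (LinearMap.toContinuousLinearMap (toEuclideanLin D)).adjoint =
      LinearMap.toContinuousLinearMap (toEuclideanLin Dᴴ) := by
  ext1 y
  have := congr($(toEuclideanLin_conjTranspose_eq_adjoint D) y)
  rw [LinearMap.adjoint_eq_toCLM_adjoint] at this
  exact this.symm

theorem toEuclideanLin_comp_adjoint_eq_smul {D : Matrix m n 𝕜} {c : 𝕜} (hD : D * Dᴴ = c • 1) :
    LinearMap.toContinuousLinearMap (toEuclideanLin D) ∘L
        (LinearMap.toContinuousLinearMap (toEuclideanLin D)).adjoint = c • 1 := by
  rw [adjoint_toContinuousLinearMap_toEuclideanLin]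
  ext1 y
  simp [← LinearMap.comp_apply, ← toLpLin_mul_same, hD]

end Matrix

/-- Projection onto `{z : ‖s - Dz‖ ≤ ε}` through a surjective affine map `D`
with `DDᴴ = C·I`: the unique minimizer of `(1/2)‖w - z‖²` is
`z* = w + max{0, 1 - ε/‖s - Dw‖}·(1/C)·Dᴴ(s - Dw)`. -/
theorem projection_through_surjective_map (C U : ℕ) (hC : 1 ≤ C)
    (D : Matrix (Fin U) (Fin C × Fin U) ℂ)
    (hD : D * Dᴴ = (C : ℂ) • (1 : Matrix (Fin U) (Fin U) ℂ))
    (w : EuclideanSpace ℂ (Fin C × Fin U)) (s : EuclideanSpace ℂ (Fin U))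
    (ε : ℝ) (hε : 0 ≤ ε)
    (zstar : EuclideanSpace ℂ (Fin C × Fin U))
    (hz : zstar = w +
        (max 0 (1 - ε / ‖s - vecE (D.mulVec (vecP w))‖) * (C : ℝ)⁻¹) •
          vecE (Dᴴ.mulVec (vecP (s - vecE (D.mulVec (vecP w)))))) :
    ‖s - vecE (D.mulVec (vecP zstar))‖ ≤ ε ∧
    (∀ z : EuclideanSpace ℂ (Fin C × Fin U),
        ‖s - vecE (D.mulVec (vecP z))‖ ≤ ε →
          1 / 2 * ‖w - zstar‖ ^ 2 ≤ 1 / 2 * ‖w - z‖ ^ 2) ∧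
    (∀ z : EuclideanSpace ℂ (Fin C × Fin U),
        ‖s - vecE (D.mulVec (vecP z))‖ ≤ ε →
          ‖w - z‖ = ‖w - zstar‖ → z = zstar) := by
  set A := LinearMap.toContinuousLinearMap (Matrix.toEuclideanLin D)
  have hA : ∀ z, vecE (D.mulVec (vecP z)) = A z := fun z => rfl
  have hAadj : ∀ y, vecE (Dᴴ.mulVec (vecP y)) = A.adjoint y := fun y => by
    rw [Matrix.adjoint_toContinuousLinearMap_toEuclideanLin]
    rfl
  have hAA : A ∘L A.adjoint = ((C : ℝ) : ℂ) • 1 :=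
    Matrix.toEuclideanLin_comp_adjoint_eq_smul (by simpa using hD)
  have hC0 : (0 : ℝ) < C := by exact_mod_cast hC
  have hzstar : zstar = A.projPreimageClosedBall C s ε w := by
    rw [hz, ContinuousLinearMap.projPreimageClosedBall, real_smul_eq_coe_smul (K := ℂ),
      ← div_eq_mul_inv, ← hAadj, ← hA]
  have hpyth : ∀ z, ‖s - A z‖ ≤ ε → ‖w - zstar‖ ^ 2 + ‖zstar - z‖ ^ 2 ≤ ‖w - z‖ ^ 2 :=
    fun z hfeas => hzstar ▸ norm_sub_sq_add_norm_sub_sq_le_of_re_inner_nonneg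
      (A.re_inner_sub_projPreimageClosedBall_nonneg s ε w hC0 hAA hε hfeas)
  simp only [hA]
  refine ⟨hzstar ▸ A.norm_sub_apply_projPreimageClosedBall_le s ε w hC0.ne' hAA hε,
    fun z hfeas => by nlinarith [hpyth z hfeas, sq_nonneg ‖zstar - z‖], fun z hfeas heq => ?_⟩
  have hsq := hpyth z hfeas
  rw [heq] at hsq
  have hdist : ‖zstar - z‖ = 0 := by nlinarith [norm_nonneg (zstar - z)]
  exact (sub_eq_zero.mp (norm_eq_zero.mp hdist)).symm
end

section
/- Block form of the projection (Lemma 2 of the paper): with w = (w_1,...,w_C), w_c ∈ ℂ^U, v = (1/C)∑_c w_c, s ∈ ℂ^U, and ε ≥ 0, the projection of w onto {z = (z_1,...,z_C) : ‖s - ∑_c z_c‖ ≤ ε} has blocks z*_c = w_c + max{0, 1 - ε/‖s - Cv‖}·((1/C)s - v) when ‖s - Cv‖ > ε, and z*_c = w_c otherwise. -/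
/-!
Only `∑ c, z c` enters the constraint. Writing `u = ∑ c, (w c - z c)`, the triangle inequality
forces `‖u‖ ≥ ‖s - ∑ c, w c‖ - ε` for every feasible `z`, and Cauchy–Schwarz gives
`C · ‖w - z‖² ≥ ‖u‖²`, with equality when all blocks of `w - z` coincide. Moving every block by
the same multiple of `s - ∑ c, w c` (the radial projection of `∑ c, w c` onto the ball, split
evenly among the `C` blocks) attains both bounds. Uniqueness holds because the Euclidean norm
is strictly convex and the feasible set is convex.
-/

open Finset

section RadialProjection

variable {E : Type*} [SeminormedAddCommGroup E] [NormedSpace ℝ E] {ε : ℝ}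

lemma max_zero_one_sub_div_mul (hε : 0 ≤ ε) {D : ℝ} (hD : 0 ≤ D) :
    max 0 (1 - ε / D) * D = max 0 (D - ε) := by
  rcases hD.eq_or_lt with rfl | hD
  · simp [hε]
  · rw [max_mul_of_nonneg _ _ hD.le, zero_mul, sub_mul, one_mul, div_mul_cancel₀ _ hD.ne']

lemma norm_max_zero_one_sub_div_smul (hε : 0 ≤ ε) (d : E) :
    ‖max 0 (1 - ε / ‖d‖) • d‖ = max 0 (‖d‖ - ε) := by
  rw [norm_smul, Real.norm_of_nonneg (le_max_left _ _),
    max_zero_one_sub_div_mul hε (norm_nonneg d)]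

lemma norm_sub_max_zero_one_sub_div_smul_le (hε : 0 ≤ ε) (d : E) :
    ‖d - max 0 (1 - ε / ‖d‖) • d‖ ≤ ε := by
  set t := max 0 (1 - ε / ‖d‖)
  have ht : t ≤ 1 := max_le zero_le_one (sub_le_self _ (div_nonneg hε (norm_nonneg d)))
  have hsmul : d - t • d = (1 - t) • d := by rw [sub_smul, one_smul]
  calc ‖d - t • d‖ = ‖d‖ - ‖t • d‖ := by
        rw [hsmul, norm_smul, norm_smul, Real.norm_of_nonneg (sub_nonneg.2 ht),
          Real.norm_of_nonneg (le_max_left _ _), sub_mul, one_mul]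
    _ ≤ ε := by
        rw [norm_max_zero_one_sub_div_smul hε]
        linarith [le_max_right 0 (‖d‖ - ε)]

end RadialProjection

lemma max_zero_one_sub_div_smul_of_norm_le {E : Type*} [NormedAddCommGroup E] [NormedSpace ℝ E]
    {ε : ℝ} {d : E} (hd : ‖d‖ ≤ ε) :
    max 0 (1 - ε / ‖d‖) • d = 0 := by
  have hε : 0 ≤ ε := (norm_nonneg d).trans hd
  rw [← norm_eq_zero, norm_max_zero_one_sub_div_smul hε, max_eq_left (by linarith)]

section Blocks

variable {ι E : Type*} [Fintype ι] [SeminormedAddCommGroup E]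

lemma sq_norm_sum_le_card_mul_sq_norm_toLp (f : ι → E) :
    ‖∑ i, f i‖ ^ 2 ≤ Fintype.card ι * ‖WithLp.toLp 2 f‖ ^ 2 := by
  rw [PiLp.norm_sq_eq_of_L2]
  calc ‖∑ i, f i‖ ^ 2 ≤ (∑ i, ‖f i‖) ^ 2 :=
        pow_le_pow_left₀ (norm_nonneg _) (norm_sum_le _ _) 2
    _ ≤ Fintype.card ι * ∑ i, ‖f i‖ ^ 2 := sq_sum_le_card_mul_sum_sq

lemma sq_norm_toLp_const (a : E) :
    ‖WithLp.toLp 2 (fun _ : ι => a)‖ ^ 2 = Fintype.card ι * ‖a‖ ^ 2 := by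
  simp [PiLp.norm_sq_eq_of_L2]

variable [NormedSpace ℝ E]

lemma convex_setOf_norm_sub_sum_le (s : E) (ε : ℝ) :
    Convex ℝ {x : PiLp 2 (fun _ : ι => E) | ‖s - ∑ i, x i‖ ≤ ε} := by
  have hsum : IsLinearMap ℝ fun x : PiLp 2 (fun _ : ι => E) => ∑ i, x i :=
    ⟨fun x y => by simp [sum_add_distrib], fun a x => by simp [smul_sum]⟩
  simpa [Set.preimage, dist_eq_norm'] using (convex_closedBall s ε).is_linear_preimage hsum

/-- The paper's `z*` without its case distinction: when `‖s - ∑ i, w i‖ ≤ ε` the factor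
`max 0 (1 - ε / ‖s - ∑ i, w i‖)` is `0` or multiplies the zero vector. -/
noncomputable def blockProj (s : E) (ε : ℝ) (w : ι → E) : ι → E :=
  fun c => w c + ((Fintype.card ι : ℝ)⁻¹ * max 0 (1 - ε / ‖s - ∑ i, w i‖)) • (s - ∑ i, w i)

variable [Nonempty ι] {ε : ℝ} (s : E) (w : ι → E)

lemma norm_sub_sum_blockProj_le (hε : 0 ≤ ε) : ‖s - ∑ c, blockProj s ε w c‖ ≤ ε := by
  have hn : (Fintype.card ι : ℝ) ≠ 0 := Nat.cast_ne_zero.2 Fintype.card_ne_zero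
  have hsum : s - ∑ c, blockProj s ε w c =
      (s - ∑ i, w i) - max 0 (1 - ε / ‖s - ∑ i, w i‖) • (s - ∑ i, w i) := by
    simp only [blockProj, sum_add_distrib, sum_const, card_univ, ← Nat.cast_smul_eq_nsmul ℝ,
      smul_smul, mul_inv_cancel_left₀ hn]
    abel
  rw [hsum]
  exact norm_sub_max_zero_one_sub_div_smul_le hε _

lemma card_mul_sq_norm_toLp_sub_blockProj (hε : 0 ≤ ε) :
    Fintype.card ι * ‖WithLp.toLp 2 (w - blockProj s ε w)‖ ^ 2 =
      max 0 (‖s - ∑ i, w i‖ - ε) ^ 2 := by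
  have hn : (0 : ℝ) < Fintype.card ι := Nat.cast_pos.2 Fintype.card_pos
  have hconst : w - blockProj s ε w = fun _ =>
      -(Fintype.card ι : ℝ)⁻¹ • max 0 (1 - ε / ‖s - ∑ i, w i‖) • (s - ∑ i, w i) := by
    ext1 c
    simp only [Pi.sub_apply, blockProj, smul_smul, neg_mul, neg_smul]
    abel
  rw [hconst, sq_norm_toLp_const, norm_smul, norm_neg, norm_inv, Real.norm_natCast,
    norm_max_zero_one_sub_div_smul hε]
  field_simp

lemma norm_toLp_sub_blockProj_le (hε : 0 ≤ ε) (z : ι → E) (hz : ‖s - ∑ i, z i‖ ≤ ε) :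
    ‖WithLp.toLp 2 (w - blockProj s ε w)‖ ≤ ‖WithLp.toLp 2 (w - z)‖ := by
  have hn : (0 : ℝ) < Fintype.card ι := Nat.cast_pos.2 Fintype.card_pos
  have hgap : max 0 (‖s - ∑ i, w i‖ - ε) ≤ ‖∑ i, (w - z) i‖ := by
    refine max_le (norm_nonneg _) ?_
    have htri := norm_sub_le (s - ∑ i, z i) (∑ i, (w - z) i)
    rw [show (s - ∑ i, z i) - ∑ i, (w - z) i = s - ∑ i, w i by
      simp only [Pi.sub_apply, sum_sub_distrib]; abel] at htri
    linarith
  refine (pow_le_pow_iff_left₀ (norm_nonneg _) (norm_nonneg _) two_ne_zero).1 ?_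
  refine le_of_mul_le_mul_left ?_ hn
  calc Fintype.card ι * ‖WithLp.toLp 2 (w - blockProj s ε w)‖ ^ 2
      = max 0 (‖s - ∑ i, w i‖ - ε) ^ 2 := card_mul_sq_norm_toLp_sub_blockProj s w hε
    _ ≤ ‖∑ i, (w - z) i‖ ^ 2 := pow_le_pow_left₀ (le_max_left _ _) hgap 2
    _ ≤ Fintype.card ι * ‖WithLp.toLp 2 (w - z)‖ ^ 2 := sq_norm_sum_le_card_mul_sq_norm_toLp _

end Blocks

lemma eq_of_norm_sub_eq_of_forall_norm_sub_le {E : Type*} [NormedAddCommGroup E]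
    [NormedSpace ℝ E] [StrictConvexSpace ℝ E] {K : Set E} (hK : Convex ℝ K) {w x y : E}
    (hx : x ∈ K) (hy : y ∈ K) (hmin : ∀ z ∈ K, ‖w - x‖ ≤ ‖w - z‖)
    (hyx : ‖w - y‖ = ‖w - x‖) : y = x := by
  by_contra hne
  have hmid : (1 / 2 : ℝ) • y + (1 / 2 : ℝ) • x ∈ K :=
    hK hy hx (by norm_num) (by norm_num) (by norm_num)
  have hlt := norm_combo_lt_of_ne hyx.le le_rfl (fun h => hne (sub_right_injective h))
    (by norm_num : (0 : ℝ) < 1 / 2) (by norm_num : (0 : ℝ) < 1 / 2) (by norm_num)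
  have hw : (1 / 2 : ℝ) • (w - y) + (1 / 2 : ℝ) • (w - x) =
      w - ((1 / 2 : ℝ) • y + (1 / 2 : ℝ) • x) := by module
  rw [hw] at hlt
  exact absurd hlt (not_lt.2 (hmin _ hmid))

/-- Block form of the projection (Lemma 2): the Euclidean projection of
`(w_1,…,w_C)` onto `{(z_1,…,z_C) : ‖s - ∑ z_c‖ ≤ ε}` has blocks
`z*_c = w_c + max{0, 1 - ε/‖s - Cv‖}·((1/C)s - v)` when `‖s - Cv‖ > ε`,
and `z*_c = w_c` otherwise, where `v = (1/C)∑ w_c`. -/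
theorem block_projection_formula (C U : ℕ) (hC : 1 ≤ C)
    (w : Fin C → EuclideanSpace ℂ (Fin U)) (s : EuclideanSpace ℂ (Fin U))
    (ε : ℝ) (hε : 0 ≤ ε)
    (v : EuclideanSpace ℂ (Fin U)) (hv : v = (C : ℝ)⁻¹ • ∑ c, w c)
    (zstar : Fin C → EuclideanSpace ℂ (Fin U))
    (hz : ∀ c, zstar c =
        if ε < ‖s - (C : ℝ) • v‖ then
          w c + max 0 (1 - ε / ‖s - (C : ℝ) • v‖) • ((C : ℝ)⁻¹ • s - v)
        else w c) :
    ‖s - ∑ c, zstar c‖ ≤ ε ∧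
    (∀ z : Fin C → EuclideanSpace ℂ (Fin U),
        ‖s - ∑ c, z c‖ ≤ ε →
          ‖(WithLp.equiv 2 (∀ _ : Fin C, EuclideanSpace ℂ (Fin U))).symm
              (fun c => w c - zstar c)‖ ≤
            ‖(WithLp.equiv 2 (∀ _ : Fin C, EuclideanSpace ℂ (Fin U))).symm
              (fun c => w c - z c)‖) ∧
    (∀ z : Fin C → EuclideanSpace ℂ (Fin U),
        ‖s - ∑ c, z c‖ ≤ ε →
          ‖(WithLp.equiv 2 (∀ _ : Fin C, EuclideanSpace ℂ (Fin U))).symm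
              (fun c => w c - z c)‖ =
            ‖(WithLp.equiv 2 (∀ _ : Fin C, EuclideanSpace ℂ (Fin U))).symm
              (fun c => w c - zstar c)‖ → z = zstar) := by
  have : Nonempty (Fin C) := ⟨⟨0, hC⟩⟩
  have hCv : s - (C : ℝ) • v = s - ∑ c, w c := by
    rw [hv, smul_smul, mul_inv_cancel₀ (by positivity), one_smul]
  have hzstar : zstar = blockProj s ε w := by
    ext1 c
    rw [hz c, hCv, blockProj, Fintype.card_fin]
    split_ifs with h
    · rw [hv, ← smul_sub, smul_smul, mul_comm]
    · rw [mul_smul, max_zero_one_sub_div_smul_of_norm_le (not_lt.1 h), smul_zero, add_zero]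
  subst hzstar
  have hmin := norm_toLp_sub_blockProj_le s w hε
  refine ⟨norm_sub_sum_blockProj_le s w hε, hmin, fun z hzε heq => ?_⟩
  refine WithLp.toLp_injective 2 <| eq_of_norm_sub_eq_of_forall_norm_sub_le
    (w := WithLp.toLp 2 w) (convex_setOf_norm_sub_sum_le (ι := Fin C) s ε)
    (norm_sub_sum_blockProj_le s w hε) hzε (fun y hy => ?_) heq
  simpa only [WithLp.toLp_sub, WithLp.toLp_ofLp] using hmin y.ofLp hy
end
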